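/- arXiv:1504.03864 — 3 statements merged into one kernel-verified Lean document; each statement's English description precedes it below -/
import Mathlib

section
/- Let v₁, v₂ ∈ Σ* with |v₁| = |v₂|, and let u₁, u₂ ∈ Σ* such that u₁ is a prefix of u₂ and for every n ∈ ℕ, u₁v₁ⁿ is a prefix of u₂v₂ⁿ. Then Δ(u₁, u₂) = Δ(u₁v₁, u₂v₂). -/
variable {S G : Type}

def wordFG (w : List G) : FreeGroup G := (w.map FreeGroup.of).prod

def delta (v w : List G) : FreeGroup G := (wordFG v)⁻¹ * wordFG w

def dlen [DecidableEq G] (v w : List G) : ℕ := (delta v w).norm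

def wpow (v : List G) (n : ℕ) : List G := (List.replicate n v).flatten

structure NFT (S G Q : Type) where
  E : Set (Q × S × List G × Q)
  I : Set Q
  F : Set Q
  out : Q → List G

namespace NFT

variable {Q Q₁ Q₂ : Type}

inductive Run (T : NFT S G Q) : Q → List S → List G → Q → Prop
  | nil (q : Q) : Run T q [] [] q
  | cons {q q' q'' : Q} {a : S} {w : List G} {u : List S} {v : List G} :
      (q, a, w, q') ∈ T.E → Run T q' u v q'' → Run T q (a :: u) (w ++ v) q''

def Rel (T : NFT S G Q) (u : List S) (v : List G) : Prop :=
  ∃ i t w, i ∈ T.I ∧ t ∈ T.F ∧ T.Run i u w t ∧ v = w ++ T.out t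

def Trim (T : NFT S G Q) : Prop :=
  ∀ q : Q, ∃ i t u₁ w₁ u₂ w₂, i ∈ T.I ∧ t ∈ T.F ∧ T.Run i u₁ w₁ q ∧ T.Run q u₂ w₂ t

def WTP (T : NFT S G Q) : Prop :=
  ∀ q₁ q₂ (u v : List S) (u₁ u₂ v₁ v₂ : List G), T.Run q₁ u u₁ q₁ → T.Run q₁ v v₁ q₁ →
    T.Run q₁ u u₂ q₂ → T.Run q₂ v v₂ q₂ →
    delta u₁ u₂ = delta (u₁ ++ v₁) (u₂ ++ v₂)

def Seq (T : NFT S G Q) : Prop :=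
  (∃ q₀, T.I = {q₀}) ∧
  ∀ q a w₁ q₁ w₂ q₂, (q, a, w₁, q₁) ∈ T.E → (q, a, w₂, q₂) ∈ T.E → w₁ = w₂ ∧ q₁ = q₂

end NFT


lemma wordFG_append (a b : List G) : wordFG (a ++ b) = wordFG a * wordFG b := by
  simp [wordFG]

lemma wpow_succ' (v : List G) (n : ℕ) : wpow v (n + 1) = v ++ wpow v n := by
  simp [wpow, List.replicate_succ]

lemma wpow_length' (v : List G) (n : ℕ) : (wpow v n).length = n * v.length := by
  induction n with
  | zero => simp [wpow]
  | succ k ih => rw [wpow_succ', List.length_append, ih]; ring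

/-- If `|v₁| = |v₂|`, `u₁` is a prefix of `u₂`, and for every `n`, `u₁v₁ⁿ` is a prefix of
`u₂v₂ⁿ`, then `Δ(u₁,u₂) = Δ(u₁v₁,u₂v₂)`. -/
theorem delay_stable_of_prefix (u₁ u₂ v₁ v₂ : List G)
    (hlen : v₁.length = v₂.length) (h12 : u₁ <+: u₂)
    (hpre : ∀ n : ℕ, (u₁ ++ wpow v₁ n) <+: (u₂ ++ wpow v₂ n)) :
    delta u₁ u₂ = delta (u₁ ++ v₁) (u₂ ++ v₂) := by
  obtain ⟨t, rfl⟩ := h12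
  have hpre' : ∀ n : ℕ, wpow v₁ n <+: t ++ wpow v₂ n := by
    intro n
    have := hpre n
    rwa [List.append_assoc, List.prefix_append_right_inj] at this
  have key : t ++ v₂ = v₁ ++ t := by
    rcases Nat.eq_zero_or_pos v₁.length with hL | hL
    · have h1 : v₁ = [] := List.length_eq_zero_iff.mp hL
      have h2 : v₂ = [] := List.length_eq_zero_iff.mp (hlen ▸ hL)
      simp [h1, h2]
    · set n := t.length + 1 with hn
      have hlen1 : t.length ≤ (wpow v₁ n).length := by
        rw [wpow_length']
        calc t.length ≤ n := by omega
          _ ≤ n * v₁.length := Nat.le_mul_of_pos_right n hL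
      have ht : t <+: wpow v₁ n := by
        rcases List.prefix_or_prefix_of_prefix (List.prefix_append t (wpow v₂ n))
            (hpre' n) with h | h
        · exact h
        · rw [h.eq_of_length (le_antisymm h.length_le hlen1)]
      have h2 : v₁ ++ t <+: t ++ v₂ ++ wpow v₂ n := by
        calc v₁ ++ t <+: v₁ ++ wpow v₁ n := by
              exact (List.prefix_append_right_inj v₁).mpr ht
          _ = wpow v₁ (n + 1) := (wpow_succ' v₁ n).symm
          _ <+: t ++ wpow v₂ (n + 1) := hpre' (n + 1)
          _ = t ++ v₂ ++ wpow v₂ n := by rw [wpow_succ', List.append_assoc]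
      have h3 : t ++ v₂ <+: t ++ v₂ ++ wpow v₂ n := List.prefix_append _ _
      have hle : (v₁ ++ t).length ≤ (t ++ v₂).length := by
        simp [hlen]; omega
      rcases List.prefix_or_prefix_of_prefix h2 h3 with h | h
      · exact (h.eq_of_length (by simp [hlen]; omega)).symm
      · exact h.eq_of_length (by simp [hlen]; omega)
  have keyFG : wordFG t * wordFG v₂ = wordFG v₁ * wordFG t := by
    rw [← wordFG_append, ← wordFG_append, key]
  simp only [delta, wordFG_append, List.append_assoc, mul_inv_rev]
  group
  rw [mul_assoc, keyFG]
  group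
end

section
/- In any transducer T, if q₁ ∼ q₂ (states q₁ and q₂ are strongly connected) defines an equivalence relation on states, and an edge is transient iff there is no run from its target back to its source, then in the split transducer split(T) = ⋃_{p ∈ P} T_p (union over paths p of the condensation DAG starting in an SCC containing an initial state, where T_p keeps only the transient edges occurring in p), the realised relation is preserved: ⟦split(T)⟧ = ⟦T⟧. -/
variable {S G : Type}

def NFT.Reach {Q : Type} (T : NFT S G Q) (q q' : Q) : Prop := ∃ u w, T.Run q u w q'

def NFT.SC {Q : Type} (T : NFT S G Q) (q q' : Q) : Prop := T.Reach q q' ∧ T.Reach q' q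

def NFT.TransientE {Q : Type} (T : NFT S G Q) (e : Q × S × List G × Q) : Prop :=
  e ∈ T.E ∧ ¬ T.Reach e.2.2.2 e.1

/-- A path of the condensation DAG starting in an SCC containing an initial state: a sequence of
transient edges, consecutive ones linked by strongly connected states, whose first edge starts in
the SCC of an initial state. -/
def NFT.CondPath {Q : Type} (T : NFT S G Q) (l : List (Q × S × List G × Q)) : Prop :=
  (∀ e ∈ l, T.TransientE e) ∧
  l.Chain' (fun e e' => T.SC e.2.2.2 e'.1) ∧
  (∀ e, l.head? = some e → ∃ i ∈ T.I, T.SC i e.1)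

/-- The subtransducer `T_p` keeping all non-transient edges and the transient edges of `p`. -/
def NFT.restrictPath {Q : Type} (T : NFT S G Q) (l : List (Q × S × List G × Q)) : NFT S G Q :=
  { E := {e ∈ T.E | ¬ T.TransientE e ∨ e ∈ l}, I := T.I, F := T.F, out := T.out }

namespace NFT

variable {Q : Type} {T : NFT S G Q}

theorem Run.append {q q' q'' : Q} {u u' : List S} {w w' : List G}
    (h : T.Run q u w q') (h' : T.Run q' u' w' q'') :
    T.Run q (u ++ u') (w ++ w') q'' := by
  induction h with
  | nil => simpa using h'
  | cons he _ ih => simpa [List.append_assoc] using Run.cons he (ih h')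

theorem Run.mono {T₁ T₂ : NFT S G Q} (hE : T₁.E ⊆ T₂.E) {q q' : Q} {u : List S} {w : List G}
    (h : T₁.Run q u w q') : T₂.Run q u w q' := by
  induction h with
  | nil q => exact Run.nil q
  | cons he _ ih => exact Run.cons (hE he) ih

theorem Reach.trans {q q' q'' : Q} : T.Reach q q' → T.Reach q' q'' → T.Reach q q''
  | ⟨_, _, h⟩, ⟨_, _, h'⟩ => ⟨_, _, h.append h'⟩

theorem Reach.of_mem_E {q q' : Q} {a : S} {w : List G} (he : (q, a, w, q') ∈ T.E) :
    T.Reach q q' :=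
  ⟨[a], w ++ [], Run.cons he (Run.nil q')⟩

theorem SC.refl (q : Q) : T.SC q q :=
  ⟨⟨[], [], Run.nil q⟩, ⟨[], [], Run.nil q⟩⟩

theorem SC.trans {q q' q'' : Q} (h : T.SC q q') (h' : T.SC q' q'') : T.SC q q'' :=
  ⟨h.1.trans h'.1, h'.2.trans h.2⟩

theorem SC.of_not_transientE {q q' : Q} {a : S} {w : List G} (he : (q, a, w, q') ∈ T.E)
    (ht : ¬ T.TransientE (q, a, w, q')) : T.SC q q' :=
  ⟨Reach.of_mem_E he, not_not.mp fun hback => ht ⟨he, hback⟩⟩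

theorem restrictPath_E_subset (l : List (Q × S × List G × Q)) : (T.restrictPath l).E ⊆ T.E :=
  fun _ he => he.1

theorem restrictPath_E_mono {l l' : List (Q × S × List G × Q)} (h : l ⊆ l') :
    (T.restrictPath l).E ⊆ (T.restrictPath l').E :=
  fun _ he => ⟨he.1, he.2.imp id (@h _)⟩

def IsCondPathFrom (T : NFT S G Q) (q : Q) (l : List (Q × S × List G × Q)) : Prop :=
  (∀ e ∈ l, T.TransientE e) ∧
  l.IsChain (fun e e' => T.SC e.2.2.2 e'.1) ∧
  (∀ e, l.head? = some e → T.SC q e.1)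

theorem isCondPathFrom_nil (q : Q) : T.IsCondPathFrom q [] :=
  ⟨by simp, List.isChain_nil, by simp⟩

theorem IsCondPathFrom.cons {q q' : Q} {a : S} {w : List G} {l : List (Q × S × List G × Q)}
    (ht : T.TransientE (q, a, w, q')) (hl : T.IsCondPathFrom q' l) :
    T.IsCondPathFrom q ((q, a, w, q') :: l) := by
  obtain ⟨hl_trans, hl_chain, hl_head⟩ := hl
  refine ⟨?_, List.isChain_cons.2 ⟨hl_head, hl_chain⟩, ?_⟩
  · rintro e (_ | ⟨_, he⟩)
    exacts [ht, hl_trans e he]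
  · rintro e ⟨⟩
    exact SC.refl q

theorem IsCondPathFrom.of_sc {q q' : Q} {l : List (Q × S × List G × Q)} (hqq' : T.SC q q')
    (hl : T.IsCondPathFrom q' l) : T.IsCondPathFrom q l :=
  ⟨hl.1, hl.2.1, fun e he => hqq'.trans (hl.2.2 e he)⟩

theorem IsCondPathFrom.condPath {i : Q} (hi : i ∈ T.I) {l : List (Q × S × List G × Q)}
    (hl : T.IsCondPathFrom i l) : T.CondPath l :=
  ⟨hl.1, hl.2.1, fun e he => ⟨i, hi, hl.2.2 e he⟩⟩

theorem Run.exists_condPathFrom {q q' : Q} {u : List S} {w : List G} (h : T.Run q u w q') :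
    ∃ l, T.IsCondPathFrom q l ∧ (T.restrictPath l).Run q u w q' := by
  induction h with
  | nil q => exact ⟨[], isCondPathFrom_nil q, Run.nil q⟩
  | @cons q q' _ a w _ _ he _ ih =>
    obtain ⟨l, hl, hrun⟩ := ih
    by_cases ht : T.TransientE (q, a, w, q')
    · refine ⟨(q, a, w, q') :: l, hl.cons ht, Run.cons ⟨he, Or.inr List.mem_cons_self⟩ ?_⟩
      exact hrun.mono (restrictPath_E_mono (List.subset_cons_self _ _))
    · exact ⟨l, hl.of_sc (SC.of_not_transientE he ht), Run.cons ⟨he, Or.inl ht⟩ hrun⟩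

end NFT

/-- The split of `T` (union of the `T_p` over condensation paths `p` from an initial SCC)
realises the same relation as `T`. -/
theorem split_equiv {Q : Type} (T : NFT S G Q) :
    ∀ u v, T.Rel u v ↔ ∃ l, T.CondPath l ∧ (T.restrictPath l).Rel u v := by
  intro u v
  constructor
  · rintro ⟨i, t, w, hi, ht, hrun, hv⟩
    obtain ⟨l, hl, hrun_l⟩ := hrun.exists_condPathFrom
    exact ⟨l, hl.condPath hi, i, t, w, hi, ht, hrun_l, hv⟩
  · rintro ⟨l, -, i, t, w, hi, ht, hrun, hv⟩
    exact ⟨i, t, w, hi, ht, hrun.mono (NFT.restrictPath_E_subset l), hv⟩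
end

section
/- The determinisation D(T) is equivalent to T: (u,v) ∈ ⟦T⟧ iff (u,v) ∈ ⟦D(T)⟧, where D(T) is the trim part of the infinite subset-with-delays determinisation D̄(T). -/
variable {S G : Type}

def IsLCP (Sw : Set (List G)) (w : List G) : Prop :=
  (∀ x ∈ Sw, w <+: x) ∧ ∀ w', (∀ x ∈ Sw, w' <+: x) → w'.length ≤ w.length

open Classical in
noncomputable def lcp (Sw : Set (List G)) : List G :=
  if h : ∃ w, IsLCP Sw w then h.choose else []

def Rstep {Q : Type} (T : NFT S G Q) (U : Set (Q × List G)) (a : S) : Set (Q × List G) :=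
  {qw | ∃ p u v, (p, u) ∈ U ∧ (p, a, v, qw.1) ∈ T.E ∧ qw.2 = u ++ v}

noncomputable def wstep {Q : Type} (T : NFT S G Q) (U : Set (Q × List G)) (a : S) : List G :=
  lcp {w | ∃ q, (q, w) ∈ Rstep T U a}

noncomputable def Pstep {Q : Type} (T : NFT S G Q) (U : Set (Q × List G)) (a : S) :
    Set (Q × List G) :=
  {qw | (qw.1, wstep T U a ++ qw.2) ∈ Rstep T U a}

noncomputable def DRun {Q : Type} (T : NFT S G Q) :
    Set (Q × List G) → List S → List G × Set (Q × List G)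
  | U, [] => ([], U)
  | U, a :: u =>
      let r := DRun T (Pstep T U a) u
      (wstep T U a ++ r.1, r.2)

open Classical in
lemma exists_lcp {Sw : Set (List G)} (hne : Sw.Nonempty) : ∃ w, IsLCP Sw w := by
  obtain ⟨x₀, hx₀⟩ := hne
  classical
  set P : ℕ → Prop := fun n => ∃ w : List G, w.length = n ∧ ∀ x ∈ Sw, w <+: x with hP
  have hP0 : P 0 := ⟨[], rfl, fun x _ => List.nil_prefix⟩
  have hNspec : P (Nat.findGreatest P x₀.length) :=
    Nat.findGreatest_spec (Nat.zero_le _) hP0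
  obtain ⟨w, hwlen, hwpre⟩ := hNspec
  refine ⟨w, hwpre, fun w' hw' => ?_⟩
  have hb : w'.length ≤ x₀.length := (hw' x₀ hx₀).length_le
  have : w'.length ≤ Nat.findGreatest P x₀.length :=
    Nat.le_findGreatest hb ⟨w', rfl, hw'⟩
  omega

lemma lcp_prefix {Sw : Set (List G)} {x : List G} (hx : x ∈ Sw) : lcp Sw <+: x := by
  classical
  unfold lcp
  have h : ∃ w, IsLCP Sw w := exists_lcp ⟨x, hx⟩
  rw [dif_pos h]
  exact h.choose_spec.1 x hx

lemma Rstep_decomp {Q : Type} (T : NFT S G Q) (U : Set (Q × List G)) (a : S)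
    (q : Q) (w : List G) :
    (q, w) ∈ Rstep T U a ↔ ∃ w', (q, w') ∈ Pstep T U a ∧ w = wstep T U a ++ w' := by
  constructor
  · intro h
    have hpre : wstep T U a <+: w := lcp_prefix (⟨q, h⟩ : ∃ p, (p, w) ∈ Rstep T U a)
    obtain ⟨w', rfl⟩ := hpre
    exact ⟨w', h, rfl⟩
  · rintro ⟨w', hw', rfl⟩
    exact hw'

lemma DRun_char {Q : Type} (T : NFT S G Q) :
    ∀ (u : List S) (U : Set (Q × List G)) (q : Q) (w : List G),
      (∃ p w₀ v, (p, w₀) ∈ U ∧ T.Run p u v q ∧ w = w₀ ++ v) ↔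
      ∃ w', (q, w') ∈ (DRun T U u).2 ∧ w = (DRun T U u).1 ++ w' := by
  intro u
  induction u with
  | nil =>
    intro U q w
    constructor
    · rintro ⟨p, w₀, v, hU, hrun, rfl⟩
      cases hrun
      exact ⟨w₀ ++ [], by simpa [DRun] using hU, by simp [DRun]⟩
    · rintro ⟨w', hw', heq⟩
      simp only [DRun, List.nil_append] at hw' heq
      exact ⟨q, w', [], hw', NFT.Run.nil q, by simp [heq]⟩
  | cons a u ih =>
    intro U q w
    simp only [DRun]
    constructor
    · rintro ⟨p, w₀, v, hU, hrun, rfl⟩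
      cases hrun with
      | cons hE hrun' =>
        rename_i p' wa va
        have hR : (p', w₀ ++ wa) ∈ Rstep T U a := ⟨p, w₀, wa, hU, hE, rfl⟩
        obtain ⟨w₁, hw₁, heq⟩ := (Rstep_decomp T U a p' (w₀ ++ wa)).mp hR
        obtain ⟨w', hw', heq'⟩ :=
          (ih (Pstep T U a) q (w₁ ++ va)).mp ⟨p', w₁, va, hw₁, hrun', rfl⟩
        refine ⟨w', hw', ?_⟩
        calc w₀ ++ (wa ++ va) = (w₀ ++ wa) ++ va := by simp
        _ = (wstep T U a ++ w₁) ++ va := by rw [heq]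
        _ = wstep T U a ++ (w₁ ++ va) := by simp
        _ = wstep T U a ++ ((DRun T (Pstep T U a) u).1 ++ w') := by rw [heq']
        _ = _ := by simp
    · rintro ⟨w', hw', rfl⟩
      obtain ⟨p', w₁, va, hP, hrun', heq'⟩ :=
        (ih (Pstep T U a) q _).mpr ⟨w', hw', rfl⟩
      have hR : (p', wstep T U a ++ w₁) ∈ Rstep T U a :=
        (Rstep_decomp T U a p' _).mpr ⟨w₁, hP, rfl⟩
      obtain ⟨p, w₀, wa, hU, hE, heqw⟩ := hR
      refine ⟨p, w₀, wa ++ va, hU, NFT.Run.cons hE hrun', ?_⟩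
      calc wstep T U a ++ (DRun T (Pstep T U a) u).1 ++ w'
          = wstep T U a ++ (w₁ ++ va) := by rw [List.append_assoc, ← heq']
        _ = (wstep T U a ++ w₁) ++ va := by simp
        _ = (w₀ ++ wa) ++ va := by rw [← heqw]
        _ = w₀ ++ (wa ++ va) := by simp

/-- The determinisation `D(T)` is equivalent to `T`. -/
theorem det_equiv {Q : Type} (T : NFT S G Q) (htrim : T.Trim) :
    ∀ u v, T.Rel u v ↔
      ∃ q w', q ∈ T.F ∧ (q, w') ∈ (DRun T {p | p.1 ∈ T.I ∧ p.2 = []} u).2 ∧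
        v = (DRun T {p | p.1 ∈ T.I ∧ p.2 = []} u).1 ++ w' ++ T.out q := by
  intro u v
  constructor
  · rintro ⟨i, t, w, hI, hF, hrun, rfl⟩
    obtain ⟨w', hw', heq⟩ :=
      (DRun_char T u {p | p.1 ∈ T.I ∧ p.2 = []} t w).mp
        ⟨i, [], w, ⟨hI, rfl⟩, hrun, by simp⟩
    exact ⟨t, w', hF, hw', by rw [heq]⟩
  · rintro ⟨t, w', hF, hw', rfl⟩
    obtain ⟨p, w₀, vr, ⟨hI, hnil⟩, hrun, heq⟩ :=
      (DRun_char T u {p | p.1 ∈ T.I ∧ p.2 = []} t _).mpr ⟨w', hw', rfl⟩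
    subst hnil
    refine ⟨p, t, vr, hI, hF, hrun, ?_⟩
    simp only [List.nil_append] at heq
    rw [← heq]
end
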